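/- arXiv:2110.02162 — 2 statements merged into one kernel-verified Lean document; each statement's English description precedes it below -/
import Mathlib

section
/- Let SL(2,ℤ) denote Matrix.SpecialLinearGroup (Fin 2) ℤ. If G is a finite group and f : SL(2,ℤ) → G is a surjective group homomorphism with G not cyclic, then 6 ≤ Nat.card G, and if Nat.card G = 6 then G is isomorphic to the symmetric group S_3 = Equiv.Perm (Fin 3). -/
/-! In an abelian quotient of `SL(2,ℤ)` the relation `S² = (ST)³` becomes `s = t⁻³`, so the image
`t` of `T` generates it; as every group of order less than 6 is abelian, a non-cyclic quotient has
order at least 6. In a non-cyclic group of order 6 the subgroup generated by an element of order 2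
is not normal (otherwise that element would commute with one of order 3, and their product would
have order 6), so the action on its three cosets is faithful and identifies the group with `S₃`. -/

open Subgroup MatrixGroups

namespace ModularGroup

lemma S_sq_eq_S_mul_T_pow_three : S ^ 2 = (S * T) ^ 3 := by
  ext i j
  fin_cases i <;> fin_cases j <;> rfl

lemma isCyclic_of_surjective_of_isMulCommutative {G : Type*} [Group G] [IsMulCommutative G]
    (f : SL(2, ℤ) →* G) (hf : Function.Surjective f) : IsCyclic G := by
  have hrel : f S ^ 2 = f S ^ 3 * f T ^ 3 := by
    rw [← Commute.mul_pow (mul_comm' (f S) (f T)), ← map_mul, ← map_pow, ← map_pow,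
      S_sq_eq_S_mul_T_pow_three]
  have hST : f S * f T ^ 3 = 1 := mul_eq_left.1 <| by rw [← mul_assoc, ← pow_succ, ← hrel]
  have hS : f S ∈ zpowers (f T) :=
    ⟨-3, show f T ^ (-3 : ℤ) = f S by rw [eq_inv_of_mul_eq_one_left hST, zpow_neg, zpow_ofNat]⟩
  have hT : f T ∈ zpowers (f T) := mem_zpowers _
  refine isCyclic_iff_exists_zpowers_eq_top.2 ⟨f T, top_le_iff.1 ?_⟩
  rw [← MonoidHom.range_eq_top.2 hf, MonoidHom.range_eq_map, ← SpecialLinearGroup.SL2Z_generators,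
    MonoidHom.map_closure, Set.image_pair, closure_le, Set.pair_subset_iff]
  exact ⟨hS, hT⟩

end ModularGroup

lemma isMulCommutative_of_card_lt_six {G : Type*} [Group G] [Finite G] (h : Nat.card G < 6) :
    IsMulCommutative G := by
  have of_prime (hp : (Nat.card G).Prime) : IsMulCommutative G :=
    have : Fact (Nat.card G).Prime := ⟨hp⟩
    have := isCyclic_of_prime_card (α := G) rfl
    inferInstance
  have := Nat.card_pos (α := G)
  interval_cases hn : Nat.card G
  · have : Subsingleton G := (Nat.card_eq_one_iff_unique.1 hn).1
    infer_instance
  · exact of_prime Nat.prime_two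
  · exact of_prime Nat.prime_three
  · exact IsPGroup.isMulCommutative_of_card_eq_prime_sq (p := 2) hn
  · exact of_prime (by norm_num)

lemma Subgroup.normalCore_eq_bot_of_card_prime {G : Type*} [Group G] [Finite G] {H : Subgroup G}
    (hp : (Nat.card H).Prime) (hH : ¬ H.Normal) : H.normalCore = ⊥ := by
  rcases (Nat.dvd_prime hp).1 (card_dvd_of_le (normalCore_le H)) with h1 | hH'
  · exact eq_bot_of_card_le _ h1.le
  · exact absurd (eq_of_le_of_card_ge (normalCore_le H) hH'.ge ▸ normalCore_normal H) hH

section CardSix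

variable {G : Type*} [Group G] [Finite G]

lemma not_normal_zpowers_of_card_eq_six (hcard : Nat.card G = 6) (hG : ¬ IsCyclic G) {a : G}
    (ha : orderOf a = 2) : ¬ (zpowers a).Normal := by
  intro hN
  obtain ⟨b, hb⟩ := exists_prime_orderOf_dvd_card' 3 (by rw [hcard]; norm_num)
  have hbN : (zpowers b).Normal := normal_of_index_eq_two <| by
    have := index_mul_card (zpowers b)
    rw [Nat.card_zpowers, hb, hcard] at this
    omega
  have hab : Commute a b := commute_of_normal_of_disjoint _ _ hN hbN
    (disjoint_of_coprime_natCard (by rw [Nat.card_zpowers, Nat.card_zpowers, ha, hb]; norm_num))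
    a b (mem_zpowers a) (mem_zpowers b)
  refine hG (isCyclic_of_orderOf_eq_card (a * b) ?_)
  rw [hab.orderOf_mul_eq_mul_orderOf_of_coprime (by rw [ha, hb]; norm_num), ha, hb, hcard]

lemma nonempty_mulEquiv_perm_fin_three_of_card_eq_six (hcard : Nat.card G = 6) (hG : ¬ IsCyclic G) :
    Nonempty (G ≃* Equiv.Perm (Fin 3)) := by
  obtain ⟨a, ha⟩ := exists_prime_orderOf_dvd_card' 2 (by rw [hcard]; norm_num)
  have hcardH : Nat.card (zpowers a) = 2 := by rw [Nat.card_zpowers, ha]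
  have hinj : Function.Injective (MulAction.toPermHom G (G ⧸ zpowers a)) := by
    rw [← MonoidHom.ker_eq_bot_iff, ← normalCore_eq_ker]
    exact normalCore_eq_bot_of_card_prime (hcardH ▸ Nat.prime_two)
      (not_normal_zpowers_of_card_eq_six hcard hG ha)
  have hcardQ : Nat.card (G ⧸ zpowers a) = 3 := by
    have := card_eq_card_quotient_mul_card_subgroup (zpowers a)
    rw [hcard, hcardH] at this
    omega
  obtain ⟨e⟩ : Nonempty (G ⧸ zpowers a ≃ Fin 3) := Finite.card_eq.1 (by simpa using hcardQ)
  let χ := e.permCongrHom.toMonoidHom.comp (MulAction.toPermHom G (G ⧸ zpowers a))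
  refine ⟨MulEquiv.ofBijective χ ((Nat.bijective_iff_injective_and_card χ).2 ⟨?_, ?_⟩)⟩
  · exact e.permCongrHom.injective.comp hinj
  · rw [Nat.card_perm, hcard, Nat.card_fin]; rfl

end CardSix

/-- The smallest non-cyclic quotient of `SL(2,ℤ)` has order at least `6`, and any
non-cyclic quotient of order `6` is isomorphic to `S_3`. -/
theorem sl2z_smallest_noncyclic_quotient
    (G : Type) [Group G] [Finite G]
    (f : Matrix.SpecialLinearGroup (Fin 2) ℤ →* G) (hf : Function.Surjective f)
    (hG : ¬ IsCyclic G) :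
    6 ≤ Nat.card G ∧ (Nat.card G = 6 → Nonempty (G ≃* Equiv.Perm (Fin 3))) := by
  refine ⟨?_, fun hcard => nonempty_mulEquiv_perm_fin_three_of_card_eq_six hcard hG⟩
  by_contra! hlt
  have := isMulCommutative_of_card_lt_six hlt
  exact hG (ModularGroup.isCyclic_of_surjective_of_isMulCommutative f hf)
end

section
/- Let B_4 be the braid group on 4 strands with generators σ_1, σ_2, σ_3, and set α = σ_3 σ_2 σ_1. There exists a group homomorphism f : B_4 → Equiv.Perm (Fin 4) such that f(σ_1) is the 3-cycle (1 2 3), f(α) is the double transposition (1 2)(3 4), and the range of f equals the alternating group on Fin 4 (Mathlib's alternatingGroup (Fin 4)). -/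
/-- The braid relations on `n` strands, as elements of the free group on
`n - 1` generators (generator `i` corresponds to the half twist `σ_{i+1}`
in the usual 1-indexed notation). -/
def braidRels (n : ℕ) : Set (FreeGroup (Fin (n - 1))) :=
  { r | (∃ i j : Fin (n - 1), (j : ℕ) = (i : ℕ) + 1 ∧
          r = FreeGroup.of i * FreeGroup.of j * FreeGroup.of i *
              (FreeGroup.of j * FreeGroup.of i * FreeGroup.of j)⁻¹) ∨
        (∃ i j : Fin (n - 1), (i : ℕ) + 2 ≤ (j : ℕ) ∧
          r = FreeGroup.of i * FreeGroup.of j * (FreeGroup.of j * FreeGroup.of i)⁻¹) }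

/-- The braid group on `n` strands, presented by the Artin generators and the
braid and far-commutation relations. -/
def BraidGroup (n : ℕ) : Type := PresentedGroup (braidRels n)

instance (n : ℕ) : Group (BraidGroup n) :=
  inferInstanceAs (Group (PresentedGroup (braidRels n)))

/-- The Artin generator `σ_k` (1-indexed, so `1 ≤ k ≤ n - 1`) of the braid group
`B_n`.  Out-of-range indices give the junk value `1`. -/
def braidGen (n k : ℕ) : BraidGroup n :=
  if h : k - 1 < n - 1 then PresentedGroup.of (⟨k - 1, h⟩ : Fin (n - 1)) else 1

/-- The transpositions corresponding to the Artin generators. -/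
def braidPermGen (n : ℕ) (i : Fin (n - 1)) : Equiv.Perm (Fin n) :=
  Equiv.swap ⟨(i : ℕ), by have := i.isLt; omega⟩ ⟨(i : ℕ) + 1, by have := i.isLt; omega⟩

theorem braidPermGen_rels (n : ℕ) :
    ∀ r ∈ braidRels n, FreeGroup.lift (braidPermGen n) r = 1 := by
  rintro r (⟨i, j, hij, rfl⟩ | ⟨i, j, hij, rfl⟩) <;>
    simp only [map_mul, map_inv, FreeGroup.lift_apply_of, mul_inv_eq_one]
  · -- braid relation
    have hi := i.isLt
    have hj := j.isLt
    unfold braidPermGen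
    set a : Fin n := ⟨(i : ℕ), by omega⟩
    set b : Fin n := ⟨(i : ℕ) + 1, by omega⟩
    set c : Fin n := ⟨(j : ℕ) + 1, by omega⟩
    have hb : (⟨(j : ℕ), by omega⟩ : Fin n) = b := by simp [b, Fin.ext_iff, hij]
    rw [hb]
    have hab : a ≠ b := by simp [a, b, Fin.ext_iff]
    have hac : a ≠ c := by simp [a, c, Fin.ext_iff]; omega
    have hbc : b ≠ c := by simp [b, c, Fin.ext_iff]; omega
    have h1 : Equiv.swap b c * Equiv.swap a b * Equiv.swap b c = Equiv.swap c a :=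
      Equiv.swap_mul_swap_mul_swap hab hac
    have h2 : Equiv.swap b a * Equiv.swap c b * Equiv.swap b a = Equiv.swap a c :=
      Equiv.swap_mul_swap_mul_swap hbc.symm hac.symm
    rw [Equiv.swap_comm b a, Equiv.swap_comm c b] at h2
    rw [h1, h2, Equiv.swap_comm c a]
  · -- far commutation
    have hi := i.isLt
    have hj := j.isLt
    unfold braidPermGen
    set a : Fin n := ⟨(i : ℕ), by omega⟩
    set b : Fin n := ⟨(i : ℕ) + 1, by omega⟩
    set c : Fin n := ⟨(j : ℕ), by omega⟩
    set d : Fin n := ⟨(j : ℕ) + 1, by omega⟩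
    have hdisj : (Equiv.swap a b).Disjoint (Equiv.swap c d) := by
      intro x
      by_cases hx : x = a ∨ x = b
      · right
        rcases hx with rfl | rfl <;>
          exact Equiv.swap_apply_of_ne_of_ne
            (by simp [a, b, c, d, Fin.ext_iff]; omega)
            (by simp [a, b, c, d, Fin.ext_iff]; omega)
      · left
        push_neg at hx
        exact Equiv.swap_apply_of_ne_of_ne hx.1 hx.2
    exact hdisj.commute

/-- The natural projection `π : B_n → S_n`, sending the Artin generator `σ_i`
to the adjacent transposition `(i, i+1)`. -/
def braidPi (n : ℕ) : BraidGroup n →* Equiv.Perm (Fin n) :=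
  PresentedGroup.toGroup (braidPermGen_rels n)

/-!
Send `σ₁` and `σ₃` to the 3-cycle `(1 2 3)` and `σ₂` to `(1 4 2)`. These satisfy the braid
relations, so they define a homomorphism on `B₄`, and it sends `σ₃ σ₂ σ₁` to `(1 2)(3 4)`
(the point `i` of `Fin 4` is labelled `i + 1`).
Its range is the subgroup generated by two 3-cycles with different fixed points; each of the
eight 3-cycles of `S₄` is a word of length at most three in them, and the 3-cycles generate `A₄`.
-/

theorem PresentedGroup.range_toGroup {α G : Type*} [Group G] {rels : Set (FreeGroup α)}
    {f : α → G} (h : ∀ r ∈ rels, FreeGroup.lift f r = 1) :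
    (PresentedGroup.toGroup h).range = Subgroup.closure (Set.range f) := by
  rw [MonoidHom.range_eq_map, ← PresentedGroup.closure_range_of, MonoidHom.map_closure,
    ← Set.range_comp]
  congr 2
  funext x
  exact PresentedGroup.toGroup.of h

theorem braidGen_eq_of {n k : ℕ} (hk : k - 1 < n - 1) :
    braidGen n k = PresentedGroup.of (⟨k - 1, hk⟩ : Fin (n - 1)) :=
  dif_pos hk

namespace BraidGroup

variable {n : ℕ} {G : Type*} [Group G] (g : Fin (n - 1) → G)

theorem lift_eq_one_of_mem_braidRels
    (hbraid : ∀ i j : Fin (n - 1), (j : ℕ) = i + 1 → g i * g j * g i = g j * g i * g j)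
    (hcomm : ∀ i j : Fin (n - 1), (i : ℕ) + 2 ≤ j → g i * g j = g j * g i) :
    ∀ r ∈ braidRels n, FreeGroup.lift g r = 1 := by
  rintro r (⟨i, j, hij, rfl⟩ | ⟨i, j, hij, rfl⟩) <;>
    simp only [map_mul, map_inv, FreeGroup.lift_apply_of, mul_inv_eq_one]
  exacts [hbraid i j hij, hcomm i j hij]

variable (hbraid : ∀ i j : Fin (n - 1), (j : ℕ) = i + 1 → g i * g j * g i = g j * g i * g j)
  (hcomm : ∀ i j : Fin (n - 1), (i : ℕ) + 2 ≤ j → g i * g j = g j * g i)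

def lift : BraidGroup n →* G :=
  PresentedGroup.toGroup (lift_eq_one_of_mem_braidRels g hbraid hcomm)

theorem lift_braidGen {k : ℕ} (hk : k - 1 < n - 1) :
    lift g hbraid hcomm (braidGen n k) = g ⟨k - 1, hk⟩ := by
  rw [braidGen_eq_of hk]
  exact PresentedGroup.toGroup.of _

theorem range_lift : (lift g hbraid hcomm).range = Subgroup.closure (Set.range g) :=
  PresentedGroup.range_toGroup _

end BraidGroup

section AlternatingFour

open Equiv.Perm

theorem eq_word_of_isThreeCycle_fin_four : ∀ σ : Equiv.Perm (Fin 4), σ.IsThreeCycle →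
    σ ∈ ({c[0, 1, 2], c[0, 1, 2]⁻¹, c[0, 3, 1], c[0, 3, 1]⁻¹, c[0, 1, 2] * c[0, 3, 1],
      c[0, 3, 1] * c[0, 1, 2], c[0, 1, 2]⁻¹ * c[0, 3, 1]⁻¹,
      c[0, 1, 2]⁻¹ * c[0, 3, 1] * c[0, 1, 2]} : Finset (Equiv.Perm (Fin 4))) := by
  simp only [IsThreeCycle]
  decide

theorem closure_pair_threeCycles_eq_alternatingGroup_fin_four :
    Subgroup.closure {c[0, 1, 2], c[0, 3, 1]} = alternatingGroup (Fin 4) := by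
  apply le_antisymm
  · rw [Subgroup.closure_le, Set.insert_subset_iff, Set.singleton_subset_iff]
    exact ⟨IsThreeCycle.mem_alternatingGroup (by simp only [IsThreeCycle]; decide),
      IsThreeCycle.mem_alternatingGroup (by simp only [IsThreeCycle]; decide)⟩
  · rw [← closure_three_cycles_eq_alternating, Subgroup.closure_le]
    intro σ hσ
    have ha : c[(0 : Fin 4), 1, 2] ∈ Subgroup.closure {c[0, 1, 2], c[0, 3, 1]} :=
      Subgroup.subset_closure (by simp)
    have hb : c[(0 : Fin 4), 3, 1] ∈ Subgroup.closure {c[0, 1, 2], c[0, 3, 1]} :=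
      Subgroup.subset_closure (by simp)
    have hword := eq_word_of_isThreeCycle_fin_four σ hσ
    simp only [Finset.mem_insert, Finset.mem_singleton] at hword
    rcases hword with rfl | rfl | rfl | rfl | rfl | rfl | rfl | rfl
    exacts [ha, inv_mem ha, hb, inv_mem hb, mul_mem ha hb, mul_mem hb ha,
      mul_mem (inv_mem ha) (inv_mem hb), mul_mem (mul_mem (inv_mem ha) hb) ha]

def alternatingFourBraidGens : Fin 3 → Equiv.Perm (Fin 4) :=
  ![c[0, 1, 2], c[0, 3, 1], c[0, 1, 2]]

theorem alternatingFourBraidGens_braid : ∀ i j : Fin 3, (j : ℕ) = i + 1 →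
    alternatingFourBraidGens i * alternatingFourBraidGens j * alternatingFourBraidGens i =
      alternatingFourBraidGens j * alternatingFourBraidGens i * alternatingFourBraidGens j := by
  decide

theorem alternatingFourBraidGens_comm : ∀ i j : Fin 3, (i : ℕ) + 2 ≤ j →
    alternatingFourBraidGens i * alternatingFourBraidGens j =
      alternatingFourBraidGens j * alternatingFourBraidGens i := by
  decide

theorem range_alternatingFourBraidGens :
    Set.range alternatingFourBraidGens = {c[0, 1, 2], c[0, 3, 1]} := by
  simp [alternatingFourBraidGens, Matrix.range_cons, Set.pair_comm]

end AlternatingFour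

/-- There is a homomorphism `f : B_4 → S_4` with `f(σ_1) = (1 2 3)`,
`f(σ_3 σ_2 σ_1) = (1 2)(3 4)` and range the alternating group `A_4`. -/
theorem exists_homomorphism_braid_four_onto_alternating_four :
    ∃ f : BraidGroup 4 →* Equiv.Perm (Fin 4),
      f (braidGen 4 1) = c[(0 : Fin 4), 1, 2] ∧
      f (braidGen 4 3 * braidGen 4 2 * braidGen 4 1) =
        Equiv.swap (0 : Fin 4) 1 * Equiv.swap (2 : Fin 4) 3 ∧
      f.range = alternatingGroup (Fin 4) := by
  have hgen (k : ℕ) (hk : k - 1 < 4 - 1) := BraidGroup.lift_braidGen alternatingFourBraidGens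
    alternatingFourBraidGens_braid alternatingFourBraidGens_comm hk
  refine ⟨_, hgen 1 (by norm_num), ?_, ?_⟩
  · rw [map_mul, map_mul, hgen 3 (by norm_num), hgen 2 (by norm_num), hgen 1 (by norm_num)]
    decide
  · rw [BraidGroup.range_lift, range_alternatingFourBraidGens,
      closure_pair_threeCycles_eq_alternatingGroup_fin_four]
end
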